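/- arXiv:2307.05698 — 4 statements merged into one kernel-verified Lean document; each statement's English description precedes it below -/
import Mathlib

section
/- Suppose for each t ∈ [T], g_{k,t}: X → ℝ satisfies g_{k,t}(x̃) ≥ β̄ > 0 for a fixed safe action x̃ ∈ X, each g_{k,t} is bounded by Ḡ in absolute value, and β ∈ (0, β̄). Suppose an algorithm plays arbitrary actions x_1,...,x_{τ_A - 1} subject to the invariant that for every t' < τ_A and every k, Σ_{t=1}^{t'} g_{k,t}(x_t) - Ḡ + β(T - t' - 1) ≥ 0, and plays x_t = x̃ for all t ≥ τ_A. Then for every k, Σ_{t=1}^{T} g_{k,t}(x_t) ≥ Ḡ + β > 0. -/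
/-- Strict constraint satisfaction via hard-stopping: if a safe action `xs` guarantees
constraint values at least `β̄ > 0`, all constraint functions are bounded by `Ḡ` in
absolute value, `0 < β < β̄`, the played actions satisfy the invariant
`Σ_{t≤t'} g_{k,t}(x_t) - Ḡ + β(T - t' - 1) ≥ 0` for all `t' < τ_A`, and the safe
action is played from round `τ_A` on, then every long-term constraint balance is at
least `Ḡ + β > 0`. -/
theorem hard_stop_constraint_satisfaction (K T τA : ℕ) (hT : 1 ≤ T)
    (hτ1 : 1 ≤ τA) (hτT : τA ≤ T)
    {X : Type*} (xs : X) (x : ℕ → X) (g : Fin K → ℕ → X → ℝ)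
    (Gbar betaBar β : ℝ) (hbetaBar : 0 < betaBar) (hβ : 0 < β) (hββ : β < betaBar)
    (hsafe : ∀ k t, betaBar ≤ g k t xs)
    (hbound : ∀ k t y, |g k t y| ≤ Gbar)
    (hinv : ∀ t' < τA, ∀ k,
      0 ≤ (∑ t ∈ Finset.Icc 1 t', g k t (x t)) - Gbar + β * ((T : ℝ) - t' - 1))
    (hplay : ∀ t, τA ≤ t → x t = xs) :
    ∀ k, Gbar + β ≤ ∑ t ∈ Finset.Icc 1 T, g k t (x t) ∧
      0 < ∑ t ∈ Finset.Icc 1 T, g k t (x t) := by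
  intro k
  have hG0 : 0 ≤ Gbar := le_trans (abs_nonneg _) (hbound k 0 xs)
  have hsplit : (∑ t ∈ Finset.Ioc 0 (τA - 1), g k t (x t)) +
      (∑ t ∈ Finset.Ioc (τA - 1) T, g k t (x t)) = ∑ t ∈ Finset.Ioc 0 T, g k t (x t) :=
    Finset.sum_Ioc_consecutive _ (Nat.zero_le _) (by omega)
  have hIcc : Finset.Icc 1 T = Finset.Ioc 0 T := by
    ext t; simp [Nat.lt_iff_add_one_le]
  have hIcc' : Finset.Icc 1 (τA - 1) = Finset.Ioc 0 (τA - 1) := by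
    ext t; simp [Nat.lt_iff_add_one_le]
  -- invariant at t' = τA - 1
  have h1 := hinv (τA - 1) (by omega) k
  rw [hIcc'] at h1
  have hcast : ((τA - 1 : ℕ) : ℝ) = (τA : ℝ) - 1 := by
    rw [Nat.cast_sub hτ1, Nat.cast_one]
  -- lower bound on safe part
  have h2 : ((Finset.Ioc (τA - 1) T).card : ℝ) * betaBar ≤
      ∑ t ∈ Finset.Ioc (τA - 1) T, g k t (x t) := by
    have : ∀ t ∈ Finset.Ioc (τA - 1) T, betaBar ≤ g k t (x t) := by
      intro t ht
      simp only [Finset.mem_Ioc] at ht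
      rw [hplay t (by omega)]
      exact hsafe k t
    calc ((Finset.Ioc (τA - 1) T).card : ℝ) * betaBar
        = ∑ _t ∈ Finset.Ioc (τA - 1) T, betaBar := by
          rw [Finset.sum_const, nsmul_eq_mul]
      _ ≤ _ := Finset.sum_le_sum this
  have hcard : (Finset.Ioc (τA - 1) T).card = T - τA + 1 := by
    rw [Nat.card_Ioc]; omega
  rw [hcard] at h2
  have hcast2 : ((T - τA + 1 : ℕ) : ℝ) = (T : ℝ) - τA + 1 := by
    rw [Nat.cast_add, Nat.cast_sub hτT, Nat.cast_one]
  rw [hcast2] at h2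
  have hTτ : (0 : ℝ) ≤ (T : ℝ) - τA := by
    have : (τA : ℝ) ≤ T := by exact_mod_cast hτT
    linarith
  rw [hIcc, ← hsplit]
  constructor
  · nlinarith [hcast]
  · nlinarith [hcast]
end

section
/- In the setting of the dual descent iterates λ_{τ+1} = Π_{[0,C·e]}(λ_τ - η g_τ(x_τ)) with λ_1 = 0, ‖g_τ(x_τ)‖_∞ ≤ Ḡ, and C = F̄/β: if the stopping time τ_A < T is triggered because some coordinate k satisfies Σ_{t=1}^{τ_A} g_{k,t}(x_t) - Ḡ + β(T - τ_A - 1) < 0, then F̄(T - τ_A) + Σ_{t=1}^{τ_A} λ_tᵀ g_t(x_t) ≤ (η/2)·T·K·Ḡ² + C²/(2η) + F̄ + C·Ḡ. Moreover if τ_A = T this bound also holds. -/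
open Finset

lemma proj_sq (C μ a : ℝ) (h1 : 0 ≤ μ) (h2 : μ ≤ C) :
    (max 0 (min C a) - μ)^2 ≤ (a - μ)^2 := by
  rcases le_total a 0 with h | h
  · rw [min_eq_right (h.trans (h1.trans h2)), max_eq_left h]
    nlinarith
  · rcases le_total C a with h' | h'
    · rw [min_eq_left h', max_eq_right (h1.trans h2)]
      nlinarith
    · rw [min_eq_right h', max_eq_right h]

lemma dd_key (K : ℕ) (C η : ℝ)
    (g lam : ℕ → Fin K → ℝ)
    (hlam1 : ∀ k, lam 1 k = 0)
    (hproj : ∀ τ, 1 ≤ τ → ∀ k, lam (τ + 1) k = max 0 (min C (lam τ k - η * g τ k)))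
    (μ : Fin K → ℝ) (hμ0 : ∀ k, 0 ≤ μ k) (hμC : ∀ k, μ k ≤ C) (n : ℕ) :
    2 * η * ∑ t ∈ Finset.Icc 1 n, ∑ k, g t k * (lam t k - μ k) ≤
      (∑ k, (μ k)^2) + η^2 * ∑ t ∈ Finset.Icc 1 n, ∑ k, (g t k)^2 := by
  have main : ∀ m : ℕ, (∑ k, (lam (m+1) k - μ k)^2)
      + 2 * η * ∑ t ∈ Finset.Icc 1 m, ∑ k, g t k * (lam t k - μ k) ≤
      (∑ k, (lam 1 k - μ k)^2) + η^2 * ∑ t ∈ Finset.Icc 1 m, ∑ k, (g t k)^2 := by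
    intro m
    induction m with
    | zero => simp
    | succ n ih =>
      rw [Finset.sum_Icc_succ_top (Nat.le_add_left 1 n),
        Finset.sum_Icc_succ_top (Nat.le_add_left 1 n)]
      have step : ∀ k : Fin K, (lam (n+1+1) k - μ k)^2 ≤
          (lam (n+1) k - μ k)^2 - 2*η * (g (n+1) k * (lam (n+1) k - μ k))
            + η^2 * (g (n+1) k)^2 := by
        intro k
        rw [hproj (n+1) (by omega) k]
        have hp := proj_sq C (μ k) (lam (n+1) k - η * g (n+1) k) (hμ0 k) (hμC k)
        nlinarith [hp]
      have hsum := Finset.sum_le_sum (fun k (_ : k ∈ Finset.univ) => step k)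
      rw [Finset.sum_add_distrib, Finset.sum_sub_distrib, ← Finset.mul_sum,
        ← Finset.mul_sum] at hsum
      linarith
  have h0 := main n
  have hnn : (0:ℝ) ≤ ∑ k, (lam (n+1) k - μ k)^2 :=
    Finset.sum_nonneg (fun _ _ => sq_nonneg _)
  have h1 : ∑ k, (lam 1 k - μ k)^2 = ∑ k, (μ k)^2 := by
    simp [hlam1]
  linarith

/-- Internalizing dual descent and hard-stopping losses: for the dual descent
iterates `λ_{τ+1} = Π_{[0,C]^K}(λ_τ - η g_τ(x_τ))` with `λ_1 = 0`,
`‖g_τ(x_τ)‖_∞ ≤ Ḡ` and `C = F̄/β`, if either `τ_A = T`, or `τ_A < T` is triggered by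
some coordinate `k` with `Σ_{t≤τ_A} g_{k,t}(x_t) - Ḡ + β(T - τ_A - 1) < 0`, then
`F̄(T - τ_A) + Σ_{t≤τ_A} λ_tᵀ g_t(x_t) ≤ (η/2) T K Ḡ² + C²/(2η) + F̄ + C Ḡ`. -/
theorem dual_descent_hard_stop_bound (K T τA : ℕ) (hτT : τA ≤ T)
    (C η Gbar Fbar β : ℝ) (hη : 0 < η) (hβ : 0 < β) (hFbar : 0 ≤ Fbar)
    (hGbar : 0 ≤ Gbar) (hC : C = Fbar / β)
    (g : ℕ → Fin K → ℝ) (lam : ℕ → Fin K → ℝ)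
    (hlam1 : ∀ k, lam 1 k = 0)
    (hproj : ∀ τ, 1 ≤ τ → ∀ k, lam (τ + 1) k = max 0 (min C (lam τ k - η * g τ k)))
    (hg : ∀ τ k, |g τ k| ≤ Gbar)
    (hstop : τA = T ∨ (τA < T ∧ ∃ k,
      (∑ t ∈ Finset.Icc 1 τA, g t k) - Gbar + β * ((T : ℝ) - τA - 1) < 0)) :
    Fbar * ((T : ℝ) - τA) + ∑ t ∈ Finset.Icc 1 τA, ∑ k, lam t k * g t k ≤
      η / 2 * T * K * Gbar ^ 2 + C ^ 2 / (2 * η) + Fbar + C * Gbar := by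
  have hC0 : 0 ≤ C := by rw [hC]; positivity
  have hCβ : C * β = Fbar := by rw [hC]; field_simp
  -- bound on sum of squares
  have hG2 : ∑ t ∈ Finset.Icc 1 τA, ∑ k, (g t k)^2 ≤ (τA : ℝ) * K * Gbar^2 := by
    have hin : ∀ t ∈ Finset.Icc 1 τA, ∑ k : Fin K, (g t k)^2 ≤ (K:ℝ) * Gbar^2 := by
      intro t _
      calc ∑ k : Fin K, (g t k)^2 ≤ ∑ _k : Fin K, Gbar^2 := by
            apply Finset.sum_le_sum
            intro k _
            have := abs_le.mp (hg t k)
            nlinarith [this.1, this.2]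
        _ = (K:ℝ) * Gbar^2 := by simp [mul_comm]
    calc ∑ t ∈ Finset.Icc 1 τA, ∑ k, (g t k)^2
        ≤ ∑ _t ∈ Finset.Icc 1 τA, (K:ℝ) * Gbar^2 := Finset.sum_le_sum hin
      _ = (τA:ℝ) * K * Gbar^2 := by
          rw [Finset.sum_const, Nat.card_Icc]
          simp [mul_assoc]
  have hG2T : ∑ t ∈ Finset.Icc 1 τA, ∑ k, (g t k)^2 ≤ (T : ℝ) * K * Gbar^2 := by
    have hτ : (τA:ℝ) ≤ T := Nat.cast_le.mpr hτT
    have h1 : (τA:ℝ) * K * Gbar^2 ≤ (T:ℝ) * K * Gbar^2 :=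
      mul_le_mul_of_nonneg_right
        (mul_le_mul_of_nonneg_right hτ (Nat.cast_nonneg K)) (sq_nonneg Gbar)
    linarith
  have hCsq : 0 ≤ C^2 / (2*η) := by positivity
  rcases hstop with hT | ⟨hlt, k, hk⟩
  · -- τA = T : comparator μ = 0
    subst hT
    have key := dd_key K C η g lam hlam1 hproj (fun _ => 0)
      (fun _ => le_refl 0) (fun _ => hC0) τA
    simp only [sub_zero] at key
    have heq : ∑ t ∈ Finset.Icc 1 τA, ∑ k, g t k * lam t k
        = ∑ t ∈ Finset.Icc 1 τA, ∑ k, lam t k * g t k := by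
      simp [mul_comm]
    rw [heq] at key
    have hμ0 : (∑ k : Fin K, ((0:ℝ))^2) = 0 := by simp
    rw [sub_self, mul_zero, zero_add]
    nlinarith [key, hG2T, mul_pos hη hη, mul_nonneg hC0 hGbar]
  · -- τA < T : comparator μ = C e_k
    set μ : Fin K → ℝ := fun j => if j = k then C else 0 with hμdef
    have key := dd_key K C η g lam hlam1 hproj μ
      (fun j => by by_cases h : j = k <;> simp [hμdef, h, hC0])
      (fun j => by by_cases h : j = k <;> simp [hμdef, h, hC0]) τA
    have hμsq : ∑ j, (μ j)^2 = C^2 := by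
      simp [hμdef, apply_ite (·^2)]
    have hinner : ∀ t, ∑ j, g t j * (lam t j - μ j)
        = (∑ j, lam t j * g t j) - C * g t k := by
      intro t
      have : ∑ j, g t j * μ j = C * g t k := by
        simp [hμdef, apply_ite (g t · * ·), mul_comm]
      calc ∑ j, g t j * (lam t j - μ j)
          = ∑ j, (lam t j * g t j - g t j * μ j) := by
            apply Finset.sum_congr rfl; intro j _; ring
        _ = (∑ j, lam t j * g t j) - ∑ j, g t j * μ j := by
            rw [Finset.sum_sub_distrib]
        _ = (∑ j, lam t j * g t j) - C * g t k := by rw [this]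
    have hkey2 : 2 * η * ((∑ t ∈ Finset.Icc 1 τA, ∑ j, lam t j * g t j)
        - C * ∑ t ∈ Finset.Icc 1 τA, g t k) ≤
        C^2 + η^2 * ∑ t ∈ Finset.Icc 1 τA, ∑ j, (g t j)^2 := by
      rw [Finset.mul_sum, ← Finset.sum_sub_distrib]
      rw [hμsq] at key
      calc 2 * η * ∑ t ∈ Finset.Icc 1 τA, ((∑ j, lam t j * g t j) - C * g t k)
          = 2 * η * ∑ t ∈ Finset.Icc 1 τA, ∑ j, g t j * (lam t j - μ j) := by
            congr 1
            apply Finset.sum_congr rfl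
            intro t _
            rw [hinner t]
        _ ≤ _ := key
    -- C * Σ g t k ≤ C*Gbar - Fbar*(T - τA - 1)
    have hCg : C * ∑ t ∈ Finset.Icc 1 τA, g t k ≤ C * Gbar - Fbar * ((T:ℝ) - τA - 1) := by
      have h1 : ∑ t ∈ Finset.Icc 1 τA, g t k ≤ Gbar - β * ((T:ℝ) - τA - 1) := by linarith
      have := mul_le_mul_of_nonneg_left h1 hC0
      calc C * ∑ t ∈ Finset.Icc 1 τA, g t k ≤ C * (Gbar - β * ((T:ℝ) - τA - 1)) := this
        _ = C * Gbar - (C * β) * ((T:ℝ) - τA - 1) := by ring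
        _ = C * Gbar - Fbar * ((T:ℝ) - τA - 1) := by rw [hCβ]
    -- divide and combine, multiplying through by 2η
    set S := ∑ t ∈ Finset.Icc 1 τA, ∑ j, lam t j * g t j with hS
    set G2 := ∑ t ∈ Finset.Icc 1 τA, ∑ j, (g t j)^2 with hG2def
    have h2η : (0:ℝ) < 2 * η := by linarith
    have hD : 2 * η * (C^2 / (2*η)) = C^2 := by field_simp
    apply le_of_mul_le_mul_left _ h2η
    have hA := mul_le_mul_of_nonneg_left hCg (le_of_lt h2η)
    have hB := mul_le_mul_of_nonneg_left hG2T (by positivity : (0:ℝ) ≤ η^2)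
    nlinarith [hkey2, hA, hB, hD]
end

section
/- Consider online linear losses ℓ_t(z) = -∇_tᵀ z with ‖∇_t‖ ≤ M, and projected gradient ascent iterates x̃_{t+1} = Π_S(x̃_t + γ∇_t) on a convex compact set S ⊆ ℝ^d containing 0 with diameter at most D, starting at x̃_1 = 0. Then for any comparator sequence y_1, ..., y_T ∈ S, Σ_{t=1}^{T} ∇_tᵀ(y_t - x̃_t) ≤ D²/(2γ) + (D/γ)·(P(y_{1:T}) + D) + (γ/2)·M²·T, where P(y_{1:T}) = Σ_{t=1}^{T-1} ‖y_t - y_{t+1}‖. -/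
/-! The projection onto a convex set makes an obtuse angle with every point of the set, so one
step of projected ascent satisfies
`2γ⟪∇_t, y - x_t⟫ ≤ ‖y - x_t‖² - ‖y - x_{t+1}‖² + γ²‖∇_t‖²` for every `y ∈ S`.
Summing with `y = y_t`, the squared distances telescope up to the drift terms
`‖y_{t+1} - x_{t+1}‖² - ‖y_t - x_{t+1}‖² ≤ 2D‖y_t - y_{t+1}‖`, which add up to `2D·P(y)`. -/

open Finset
open scoped RealInnerProductSpace

theorem Finset.sum_range_succ_diag_sub {G : Type*} [AddCommGroup G] (a : ℕ → ℕ → G) (n : ℕ) :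
    ∑ t ∈ range (n + 1), (a t t - a t (t + 1)) =
      a 0 0 - a n (n + 1) + ∑ i ∈ range n, (a (i + 1) (i + 1) - a i (i + 1)) := by
  simp only [sum_sub_distrib]
  rw [sum_range_succ' (fun t => a t t), sum_range_succ (fun t => a t (t + 1))]
  abel

theorem sq_norm_sub_sq_norm_le_of_norm_le {E : Type*} [SeminormedAddCommGroup E] {u v : E}
    {D : ℝ} (hu : ‖u‖ ≤ D) (hv : ‖v‖ ≤ D) : ‖u‖ ^ 2 - ‖v‖ ^ 2 ≤ 2 * D * ‖u - v‖ := by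
  have hdiff : ‖u‖ - ‖v‖ ≤ ‖u - v‖ := norm_sub_norm_le u v
  nlinarith [norm_nonneg u, norm_nonneg v, norm_nonneg (u - v)]

theorem sum_sq_norm_sub_telescope_le {E : Type*} [SeminormedAddCommGroup E] {S : Set E} {D : ℝ}
    (hD : ∀ a ∈ S, ∀ b ∈ S, ‖a - b‖ ≤ D) {x y : ℕ → E} (hx : ∀ t, x t ∈ S) (hy : ∀ t, y t ∈ S)
    (T : ℕ) :
    ∑ t ∈ range T, (‖y t - x t‖ ^ 2 - ‖y t - x (t + 1)‖ ^ 2) ≤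
      D ^ 2 + 2 * D * ∑ t ∈ range (T - 1), ‖y t - y (t + 1)‖ := by
  cases T with
  | zero => simpa using sq_nonneg D
  | succ n =>
    rw [sum_range_succ_diag_sub (fun t s => ‖y t - x s‖ ^ 2), Nat.add_sub_cancel, mul_sum]
    have hfirst : ‖y 0 - x 0‖ ^ 2 ≤ D ^ 2 :=
      pow_le_pow_left₀ (norm_nonneg _) (hD _ (hy 0) _ (hx 0)) 2
    have hdrift : ∑ i ∈ range n, (‖y (i + 1) - x (i + 1)‖ ^ 2 - ‖y i - x (i + 1)‖ ^ 2) ≤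
        ∑ i ∈ range n, 2 * D * ‖y i - y (i + 1)‖ := by
      refine sum_le_sum fun i _ => ?_
      have h := sq_norm_sub_sq_norm_le_of_norm_le (hD _ (hy (i + 1)) _ (hx (i + 1)))
        (hD _ (hy i) _ (hx (i + 1)))
      rwa [sub_sub_sub_cancel_right, norm_sub_rev (y (i + 1)) (y i)] at h
    nlinarith [sq_nonneg ‖y n - x (n + 1)‖]

section ProjectedAscent

variable {F : Type*} [NormedAddCommGroup F] [InnerProductSpace ℝ F] {S : Set F}

theorem real_inner_sub_le_zero_of_forall_norm_sub_le (hS : Convex ℝ S) {u p z : F}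
    (hp : p ∈ S) (hmin : ∀ w ∈ S, ‖p - u‖ ≤ ‖w - u‖) (hz : z ∈ S) :
    ⟪u - p, z - p⟫ ≤ 0 := by
  have hbdd : BddBelow (Set.range fun w : S => ‖u - w‖) :=
    ⟨0, by rintro _ ⟨w, rfl⟩; exact norm_nonneg _⟩
  have hinf : ‖u - p‖ = ⨅ w : S, ‖u - w‖ := by
    have : Nonempty S := ⟨⟨p, hp⟩⟩
    refine le_antisymm (le_ciInf fun w => ?_) (ciInf_le hbdd ⟨p, hp⟩)
    simpa only [norm_sub_rev u] using hmin w w.2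
  exact (norm_eq_iInf_iff_real_inner_le_zero hS hp).1 hinf z hz

theorem two_mul_inner_le_of_projected_step (hS : Convex ℝ S) {x g p y : F} (γ : ℝ)
    (hp : p ∈ S) (hmin : ∀ w ∈ S, ‖p - (x + γ • g)‖ ≤ ‖w - (x + γ • g)‖) (hy : y ∈ S) :
    2 * γ * ⟪g, y - x⟫ ≤ ‖y - x‖ ^ 2 - ‖y - p‖ ^ 2 + γ ^ 2 * ‖g‖ ^ 2 := by
  have hobtuse := real_inner_sub_le_zero_of_forall_norm_sub_le hS hp hmin hy
  have hexpand : ‖(y - x) - γ • g‖ ^ 2 = ‖y - x‖ ^ 2 - 2 * γ * ⟪g, y - x⟫ + γ ^ 2 * ‖g‖ ^ 2 := by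
    rw [norm_sub_sq_real, real_inner_smul_right, real_inner_comm, norm_smul, Real.norm_eq_abs,
      mul_pow, sq_abs]
    ring
  have hcontract : ‖y - p‖ ^ 2 ≤ ‖(y - x) - γ • g‖ ^ 2 := by
    have hsplit : (y - x) - γ • g = (y - p) - (x + γ • g - p) := by abel
    rw [hsplit, norm_sub_sq_real (y - p), real_inner_comm]
    nlinarith [sq_nonneg ‖x + γ • g - p‖]
  linarith

theorem two_mul_sum_inner_le_of_projected_ascent (hS : Convex ℝ S) {D M γ : ℝ}
    (hD : ∀ a ∈ S, ∀ b ∈ S, ‖a - b‖ ≤ D) {g x y : ℕ → F} (hg : ∀ t, ‖g t‖ ≤ M)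
    (hx : ∀ t, x t ∈ S)
    (hproj : ∀ t, ∀ w ∈ S, ‖x (t + 1) - (x t + γ • g t)‖ ≤ ‖w - (x t + γ • g t)‖)
    (hy : ∀ t, y t ∈ S) (T : ℕ) :
    2 * γ * ∑ t ∈ range T, ⟪g t, y t - x t⟫ ≤
      D ^ 2 + 2 * D * ∑ t ∈ range (T - 1), ‖y t - y (t + 1)‖ + γ ^ 2 * M ^ 2 * T := by
  have hstep : ∀ t, 2 * γ * ⟪g t, y t - x t⟫ ≤
      ‖y t - x t‖ ^ 2 - ‖y t - x (t + 1)‖ ^ 2 + γ ^ 2 * M ^ 2 := fun t => by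
    have hgM : ‖g t‖ ^ 2 ≤ M ^ 2 := pow_le_pow_left₀ (norm_nonneg _) (hg t) 2
    have := two_mul_inner_le_of_projected_step hS γ (hx (t + 1)) (hproj t) (hy t)
    nlinarith [sq_nonneg γ]
  calc 2 * γ * ∑ t ∈ range T, ⟪g t, y t - x t⟫
      ≤ ∑ t ∈ range T, (‖y t - x t‖ ^ 2 - ‖y t - x (t + 1)‖ ^ 2 + γ ^ 2 * M ^ 2) := by
        rw [mul_sum]; exact sum_le_sum fun t _ => hstep t
    _ = ∑ t ∈ range T, (‖y t - x t‖ ^ 2 - ‖y t - x (t + 1)‖ ^ 2) + γ ^ 2 * M ^ 2 * T := by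
        rw [sum_add_distrib, sum_const, card_range, nsmul_eq_mul, mul_comm]
    _ ≤ _ := by gcongr; exact sum_sq_norm_sub_telescope_le hD hx hy T

end ProjectedAscent

theorem ogd_dynamic_regret_general (d T : ℕ) (γ M D : ℝ) (hγ : 0 < γ)
    (S : Set (EuclideanSpace ℝ (Fin d))) (hSconv : Convex ℝ S)
    (hD : ∀ a ∈ S, ∀ b ∈ S, ‖a - b‖ ≤ D)
    (grad : ℕ → EuclideanSpace ℝ (Fin d)) (hgrad : ∀ t, ‖grad t‖ ≤ M)
    (x : ℕ → EuclideanSpace ℝ (Fin d))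
    (hxS : ∀ t, x t ∈ S)
    (hproj : ∀ t, ∀ z ∈ S,
      ‖x (t + 1) - (x t + γ • grad t)‖ ≤ ‖z - (x t + γ • grad t)‖)
    (y : ℕ → EuclideanSpace ℝ (Fin d)) (hy : ∀ t, y t ∈ S) :
    ∑ t ∈ Finset.range T, (inner ℝ (grad t) (y t - x t) : ℝ) ≤
      D ^ 2 / (2 * γ) +
        (D / γ) * ((∑ t ∈ Finset.range (T - 1), ‖y t - y (t + 1)‖) + D) +
        γ / 2 * M ^ 2 * T := by
  have hregret := two_mul_sum_inner_le_of_projected_ascent hSconv hD hgrad hxS hproj hy T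
  set P := ∑ t ∈ range (T - 1), ‖y t - y (t + 1)‖
  have hrhs : 2 * γ * (D ^ 2 / (2 * γ) + D / γ * (P + D) + γ / 2 * M ^ 2 * T) =
      D ^ 2 + 2 * D * P + 2 * D ^ 2 + γ ^ 2 * M ^ 2 * T := by
    field_simp
    ring
  rw [← mul_le_mul_iff_of_pos_left (by positivity : (0 : ℝ) < 2 * γ), hrhs]
  linarith [sq_nonneg D]

/-- Dynamic regret of projected online gradient ascent: with step size `γ > 0`,
gradients `‖∇_t‖ ≤ M`, iterates `x_{t+1} = Π_S(x_t + γ ∇_t)` started at `x_0 = 0` on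
a convex compact set `S ∋ 0` of diameter at most `D`, for any comparator sequence
`y_t ∈ S`,
`Σ_{t<T} ∇_tᵀ(y_t - x_t) ≤ D²/(2γ) + (D/γ)(P(y) + D) + (γ/2) M² T`,
where `P(y) = Σ_{t<T-1} ‖y_t - y_{t+1}‖` is the path length. -/
theorem ogd_dynamic_regret (d T : ℕ) (γ M D : ℝ) (hγ : 0 < γ) (hM : 0 ≤ M)
    (S : Set (EuclideanSpace ℝ (Fin d))) (hSconv : Convex ℝ S)
    (hScomp : IsCompact S) (h0S : (0 : EuclideanSpace ℝ (Fin d)) ∈ S)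
    (hD : ∀ a ∈ S, ∀ b ∈ S, ‖a - b‖ ≤ D)
    (grad : ℕ → EuclideanSpace ℝ (Fin d)) (hgrad : ∀ t, ‖grad t‖ ≤ M)
    (x : ℕ → EuclideanSpace ℝ (Fin d)) (hx0 : x 0 = 0)
    (hxS : ∀ t, x t ∈ S)
    (hproj : ∀ t, ∀ z ∈ S,
      ‖x (t + 1) - (x t + γ • grad t)‖ ≤ ‖z - (x t + γ • grad t)‖)
    (y : ℕ → EuclideanSpace ℝ (Fin d)) (hy : ∀ t, y t ∈ S) :
    ∑ t ∈ Finset.range T, (inner ℝ (grad t) (y t - x t) : ℝ) ≤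
      D ^ 2 / (2 * γ) +
        (D / γ) * ((∑ t ∈ Finset.range (T - 1), ‖y t - y (t + 1)‖) + D) +
        γ / 2 * M ^ 2 * T :=
  ogd_dynamic_regret_general d T γ M D hγ S hSconv hD grad hgrad x hxS hproj y hy
end

section
/- Let F: X → ℝ and G_k: X → ℝ (k ∈ [K]) be functions on a compact set X, and suppose x̃ ∈ X satisfies G_k(x̃) ≥ β̄ > 0 for all k, and F(x) ≥ 0 on X. Define ξ = 1 - (min_{k,x} G_k(x))/β̄ ≥ 1, and let x* ∈ X, λ ∈ ℝ^K_{≥0} be arbitrary. If ỹ ∈ X maximizes x ↦ F(x) + λᵀG(x), then ξ·F(ỹ) ≥ F(x*) - ξ·λᵀG(ỹ). -/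
/-- Competitive-ratio lemma for the adversarial world: with a safe action `xs`
satisfying `G_k(xs) ≥ β̄ > 0` for all `k`, a nonnegative objective `F`,
`ξ = 1 - m/β̄ ≥ 1` where `m = min_{k,x} G_k(x)`, a nonnegative dual `λ`, and `ỹ`
maximizing `x ↦ F(x) + λᵀG(x)`, we have `ξ F(ỹ) ≥ F(x*) - ξ λᵀG(ỹ)` for any `x*`. -/
theorem adversarial_competitive_ratio {X : Type*} (K : ℕ)
    (F : X → ℝ) (G : Fin K → X → ℝ) (betaBar m ξ : ℝ) (hbetaBar : 0 < betaBar)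
    (xs : X) (hsafe : ∀ k, betaBar ≤ G k xs)
    (hFnonneg : ∀ x, 0 ≤ F x)
    (hm_lb : ∀ k x, m ≤ G k x) (hm_attained : ∃ k x, G k x = m)
    (hξ : ξ = 1 - m / betaBar) (hξ1 : 1 ≤ ξ)
    (lam : Fin K → ℝ) (hlam : ∀ k, 0 ≤ lam k)
    (xstar ytil : X)
    (hmax : ∀ x, F x + ∑ k, lam k * G k x ≤ F ytil + ∑ k, lam k * G k ytil) :
    F xstar - ξ * ∑ k, lam k * G k ytil ≤ ξ * F ytil := by
  have hmeq : m = (1 - ξ) * betaBar := by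
    have : m / betaBar = 1 - ξ := by linarith [hξ]
    field_simp at this; linarith
  have hlamsum : (0:ℝ) ≤ ∑ k, lam k :=
    Finset.sum_nonneg fun k _ => hlam k
  have h1 := hmax xstar
  have h2 := hmax xs
  have h2' : betaBar * ∑ k, lam k ≤ ∑ k, lam k * G k xs := by
    rw [Finset.mul_sum]
    exact Finset.sum_le_sum fun k _ => by
      rw [mul_comm betaBar]
      exact mul_le_mul_of_nonneg_left (hsafe k) (hlam k)
  have h3 : m * ∑ k, lam k ≤ ∑ k, lam k * G k xstar := by
    rw [Finset.mul_sum]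
    exact Finset.sum_le_sum fun k _ => by
      rw [mul_comm m]
      exact mul_le_mul_of_nonneg_left (hm_lb k xstar) (hlam k)
  have hL : betaBar * ∑ k, lam k ≤ F ytil + ∑ k, lam k * G k ytil := by
    have := hFnonneg xs; linarith
  nlinarith [hFnonneg ytil, mul_nonneg (sub_nonneg.2 hξ1) hlamsum,
    mul_le_mul_of_nonneg_left hL (sub_nonneg.2 hξ1)]
end
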